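/- arXiv:2212.02859 — 6 statements merged into one kernel-verified Lean document; each statement's English description precedes it below -/
import Mathlib

section
/- Let m ≥ 1, let P ∈ {0,1}^m be a boolean vector and Q ∈ {0,1,*}^m a boolean wildcard vector. Define the transformed vectors P_t ∈ ℤ^{m+1} by P_t(i) = 1 if P(i) = 0, P_t(i) = -1 if P(i) = 1, and P_t(m+1) = 1; and Q_t ∈ ℤ^{m+1} by Q_t(i) = 1 if Q(i) = 0, Q_t(i) = -1 if Q(i) = 1, Q_t(i) = 0 if Q(i) = *, and Q_t(m+1) = -(m - cnt) where cnt is the number of wildcard positions of Q. Then the inner product P_t · Q_t equals -2·d, where d is the number of non-wildcard positions i with P(i) ≠ Q(i). -/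
/-- BWMA encoding of an index bit: false ↦ 1, true ↦ -1. -/
def encP (b : Bool) : ℤ := if b then -1 else 1

/-- BWMA encoding of a query symbol: wildcard ↦ 0, otherwise as `encP`. -/
def encQ (o : Option Bool) : ℤ := o.elim 0 (fun b => if b then -1 else 1)

/-- Transformed index vector `P_t ∈ ℤ^{m+1}`. -/
def transIndex (m : ℕ) (P : Fin m → Bool) : Fin (m + 1) → ℤ :=
  Fin.snoc (fun i => encP (P i)) 1

/-- Transformed query vector `Q_t ∈ ℤ^{m+1}`; the last coordinate is
minus the number of non-wildcard positions, i.e. `-(m - cnt)`. -/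
def transQuery (m : ℕ) (Q : Fin m → Option Bool) : Fin (m + 1) → ℤ :=
  Fin.snoc (fun i => encQ (Q i))
    (-((Finset.univ.filter (fun i : Fin m => (Q i).isSome)).card : ℤ))

theorem bwma_dot_eq_neg_two_mul_mismatches
    (m : ℕ) (hm : 1 ≤ m) (P : Fin m → Bool) (Q : Fin m → Option Bool) :
    ∑ i : Fin (m + 1), transIndex m P i * transQuery m Q i =
      -2 * ((Finset.univ.filter
        (fun i : Fin m => (Q i).isSome ∧ Q i ≠ some (P i))).card : ℤ) := by
  rw [Fin.sum_univ_castSucc]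
  simp only [transIndex, transQuery, Fin.snoc_castSucc, Fin.snoc_last]
  have key : ∀ i : Fin m, encP (P i) * encQ (Q i) =
      (if (Q i).isSome then (1:ℤ) else 0) -
        2 * (if (Q i).isSome ∧ Q i ≠ some (P i) then 1 else 0) := by
    intro i
    cases hq : Q i with
    | none => simp [encQ, hq]
    | some b => cases b <;> cases hb : P i <;> simp [encP, encQ, hq, hb]
  simp only [key]
  rw [Finset.sum_sub_distrib, ← Finset.mul_sum]
  push_cast [Finset.card_filter]
  ring
end

section
/- With the same transformation as in the boolean wildcard matching algorithm (P_t and Q_t as above), the inner product P_t · Q_t is always ≤ 0, and P_t · Q_t = 0 if and only if P matches Q, i.e., P(i) = Q(i) at every non-wildcard position i of Q. -/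
theorem bwma_dot_nonpos_and_zero_iff_match
    (m : ℕ) (P : Fin m → Bool) (Q : Fin m → Option Bool) :
    (∑ i : Fin (m + 1), transIndex m P i * transQuery m Q i) ≤ 0 ∧
    ((∑ i : Fin (m + 1), transIndex m P i * transQuery m Q i) = 0 ↔
      ∀ i : Fin m, ∀ b : Bool, Q i = some b → P i = b) := by
  set s := Finset.univ.filter (fun i : Fin m => (Q i).isSome) with hs
  have hsum : (∑ i : Fin (m + 1), transIndex m P i * transQuery m Q i) =
      (∑ i ∈ s, encP (P i) * encQ (Q i)) - s.card := by
    rw [Fin.sum_univ_castSucc]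
    simp only [transIndex, transQuery, Fin.snoc_castSucc, Fin.snoc_last, one_mul]
    rw [← Finset.sum_filter_of_ne (p := fun i : Fin m => (Q i).isSome)]
    · ring
    · intro i _ h
      cases hq : Q i with
      | none => exfalso; apply h; simp [encQ, hq]
      | some b => simp [hq]
  have hterm : ∀ i ∈ s, encP (P i) * encQ (Q i) ≤ 1 := by
    intro i hi
    rcases hq : Q i with _ | b
    · simp [hs, hq] at hi
    · cases b <;> cases hb : P i <;> simp [encP, encQ, hq, hb]
  have hle : (∑ i ∈ s, encP (P i) * encQ (Q i)) ≤ s.card := by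
    calc (∑ i ∈ s, encP (P i) * encQ (Q i)) ≤ ∑ i ∈ s, (1 : ℤ) :=
          Finset.sum_le_sum hterm
      _ = s.card := by simp
  constructor
  · omega
  · constructor
    · intro h0 i b hq
      have heq : (∑ i ∈ s, encP (P i) * encQ (Q i)) = ∑ i ∈ s, (1 : ℤ) := by
        simp at hle ⊢; omega
      have := (Finset.sum_eq_sum_iff_of_le hterm).mp heq i (by simp [hs, hq])
      cases b <;> cases hb : P i <;> simp [encP, encQ, hq, hb] at this ⊢
    · intro hm
      rw [hsum]
      have : (∑ i ∈ s, encP (P i) * encQ (Q i)) = ∑ i ∈ s, (1 : ℤ) := by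
        apply Finset.sum_congr rfl
        intro i hi
        rcases hq : Q i with _ | b
        · simp [hs, hq] at hi
        · have := hm i b hq
          cases b <;> simp [encP, encQ, hq, this]
      simp [this]
end

section
/- Let I_x and I_y be n×n lower triangular matrices with all diagonal entries equal to 1, let U and Q be n×n lower triangular matrices, and let M₁, M₂ be invertible n×n matrices, all over a commutative ring. Define U* = M₁ · I_x · U · I_x · M₂ and Q* = M₂⁻¹ · I_y · Q · I_y · M₁⁻¹. Then trace(U* · Q*) = Σ_i U(i,i) · Q(i,i). -/
section aux
variable {n : ℕ} {R : Type*} [CommRing R]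

lemma lowtri_mul {A B : Matrix (Fin n) (Fin n) R}
    (hA : ∀ i j : Fin n, i < j → A i j = 0)
    (hB : ∀ i j : Fin n, i < j → B i j = 0) :
    ∀ i j : Fin n, i < j → (A * B) i j = 0 := by
  intro i j hij
  simp only [Matrix.mul_apply]
  apply Finset.sum_eq_zero
  intro k _
  rcases lt_or_ge i k with h | h
  · rw [hA i k h, zero_mul]
  · rw [hB k j (lt_of_le_of_lt h hij), mul_zero]

lemma lowtri_mul_diag {A B : Matrix (Fin n) (Fin n) R}
    (hA : ∀ i j : Fin n, i < j → A i j = 0)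
    (hB : ∀ i j : Fin n, i < j → B i j = 0) :
    ∀ i : Fin n, (A * B) i i = A i i * B i i := by
  intro i
  simp only [Matrix.mul_apply]
  rw [Finset.sum_eq_single i]
  · intro k _ hk
    rcases lt_or_ge i k with h | h
    · rw [hA i k h, zero_mul]
    · rw [hB k i (lt_of_le_of_ne h hk), mul_zero]
  · simp

end aux

theorem hidden_key_trace_correctness
    {n : ℕ} {R : Type*} [CommRing R]
    (Ix Iy U Q M₁ M₂ : Matrix (Fin n) (Fin n) R)
    [Invertible M₁] [Invertible M₂]
    (hIx : ∀ i j : Fin n, i < j → Ix i j = 0)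
    (hIxdiag : ∀ i : Fin n, Ix i i = 1)
    (hIy : ∀ i j : Fin n, i < j → Iy i j = 0)
    (hIydiag : ∀ i : Fin n, Iy i i = 1)
    (hU : ∀ i j : Fin n, i < j → U i j = 0)
    (hQ : ∀ i j : Fin n, i < j → Q i j = 0) :
    ((M₁ * Ix * U * Ix * M₂) * (⅟M₂ * Iy * Q * Iy * ⅟M₁)).trace =
      ∑ i : Fin n, U i i * Q i i := by
  have key : ((M₁ * Ix * U * Ix * M₂) * (⅟M₂ * Iy * Q * Iy * ⅟M₁))
      = M₁ * ((Ix * U * Ix) * (Iy * Q * Iy)) * ⅟M₁ := by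
    simp only [mul_assoc]
    rw [← mul_assoc M₂ (⅟M₂), mul_invOf_self, one_mul]
  rw [key, Matrix.trace_mul_cycle, ← mul_assoc, invOf_mul_self, one_mul]
  have hXU := lowtri_mul (A := Ix * U) (B := Ix) (lowtri_mul hIx hU) hIx
  have hYQ := lowtri_mul (A := Iy * Q) (B := Iy) (lowtri_mul hIy hQ) hIy
  rw [Matrix.trace]
  apply Finset.sum_congr rfl
  intro i _
  rw [Matrix.diag_apply, lowtri_mul_diag hXU hYQ,
    lowtri_mul_diag (lowtri_mul hIx hU) hIx,
    lowtri_mul_diag hIx hU,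
    lowtri_mul_diag (lowtri_mul hIy hQ) hIy,
    lowtri_mul_diag hIy hQ,
    hIxdiag, hIydiag]
  ring
end

section
/- Let u, q ∈ ℤ^n with u(n) = k > 0, q(n) = 1, and suppose u(i) = r_u · p(i) and q(i) = r_m · g(i) for i < n, where r_u > k, r_m ≥ 1, and p, g are integer vectors whose inner product Σ_{i<n} p(i)·g(i) is either 0 (match) or ≤ -2 (mismatch). Then the full inner product Σ_i u(i)·q(i) equals k > 0 in the match case, and is strictly negative in the mismatch case. In particular Σ_i u(i)·q(i) > 0 if and only if p and g match, and in that case it equals k. -/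
theorem hkquery_decision
    (n : ℕ) (u q : Fin (n + 1) → ℤ) (p g : Fin n → ℤ)
    (k ru rm : ℤ)
    (hk : 0 < k)
    (hulast : u (Fin.last n) = k)
    (hqlast : q (Fin.last n) = 1)
    (hu : ∀ i : Fin n, u i.castSucc = ru * p i)
    (hq : ∀ i : Fin n, q i.castSucc = rm * g i)
    (hru : k < ru)
    (hrm : 1 ≤ rm)
    (hpg : (∑ i : Fin n, p i * g i) = 0 ∨ (∑ i : Fin n, p i * g i) ≤ -2) :
    ((∑ i : Fin n, p i * g i) = 0 → (∑ i : Fin (n + 1), u i * q i) = k) ∧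
    ((∑ i : Fin n, p i * g i) ≤ -2 → (∑ i : Fin (n + 1), u i * q i) < 0) ∧
    (0 < (∑ i : Fin (n + 1), u i * q i) ↔ (∑ i : Fin n, p i * g i) = 0) := by
  have hsum : (∑ i : Fin (n + 1), u i * q i)
      = ru * rm * (∑ i : Fin n, p i * g i) + k := by
    rw [Fin.sum_univ_castSucc, hulast, hqlast, Finset.mul_sum]
    congr 1
    · apply Finset.sum_congr rfl
      intro i _
      rw [hu i, hq i]; ring
    · ring
  set S := (∑ i : Fin n, p i * g i) with hS
  have h1 : S = 0 → (∑ i : Fin (n + 1), u i * q i) = k := by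
    intro h; rw [hsum, h]; ring
  have h2 : S ≤ -2 → (∑ i : Fin (n + 1), u i * q i) < 0 := by
    intro h; rw [hsum]
    have hru0 : (0:ℤ) < ru := by linarith
    have hA : ru ≤ ru * rm := le_mul_of_one_le_right hru0.le hrm
    have hB : ru * rm * S ≤ ru * rm * (-2) :=
      mul_le_mul_of_nonneg_left h (by positivity)
    nlinarith
  refine ⟨h1, h2, ?_⟩
  constructor
  · intro hpos
    rcases hpg with h | h
    · exact h
    · exact absurd hpos (not_lt.mpr (le_of_lt (h2 h)))
  · intro h; rw [h1 h]; exact hk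
end

section
/- Combining the previous facts: let p ∈ {0,1}^m and g ∈ {0,1,*}^m be transformed by the BWMA encodings to p_t, g_t ∈ ℤ^{m+1}, let k, r_u, r_m be positive integers with r_u > k and r_m ≥ 1, and set u = (r_u · p_t, k) ∈ ℤ^{m+2}, q = (r_m · g_t, 1) ∈ ℤ^{m+2}. If U, Q are lower triangular (m+2)×(m+2) integer matrices with diagonals u and q respectively, I_x, I_y are unit lower triangular, and M₁, M₂ are invertible, then trace((M₁ I_x U I_x M₂)·(M₂⁻¹ I_y Q I_y M₁⁻¹)) equals k if p matches g at all non-wildcard positions (the match case requires at least one non-wildcard position), and is strictly negative otherwise. -/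
section Aux

variable {n : ℕ}

def LowTri (A : Matrix (Fin n) (Fin n) ℤ) : Prop := ∀ i j, i < j → A i j = 0

lemma LowTri.mul {A B : Matrix (Fin n) (Fin n) ℤ} (hA : LowTri A) (hB : LowTri B) :
    LowTri (A * B) := by
  intro i j hij
  rw [Matrix.mul_apply]
  apply Finset.sum_eq_zero
  intro x _
  rcases lt_or_ge i x with h | h
  · rw [hA i x h, zero_mul]
  · rw [hB x j (lt_of_le_of_lt h hij), mul_zero]

lemma LowTri.diag_mul {A B : Matrix (Fin n) (Fin n) ℤ} (hA : LowTri A) (hB : LowTri B)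
    (i : Fin n) : (A * B) i i = A i i * B i i := by
  rw [Matrix.mul_apply]
  apply Finset.sum_eq_single i
  · intro x _ hx
    rcases lt_or_gt_of_ne hx with h | h
    · rw [hB x i h, mul_zero]
    · rw [hA i x h, zero_mul]
  · intro h; exact absurd (Finset.mem_univ i) h

lemma trace_tri_mul {A B : Matrix (Fin n) (Fin n) ℤ} (hA : LowTri A) (hB : LowTri B) :
    (A * B).trace = ∑ i, A i i * B i i := by
  rw [Matrix.trace]
  exact Finset.sum_congr rfl fun i _ => hA.diag_mul hB i

end Aux

theorem hidden_key_end_to_end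
    (m : ℕ) (p : Fin m → Bool) (g : Fin m → Option Bool)
    (k ru rm : ℤ) (hk : 0 < k) (hru : k < ru) (hrm : 1 ≤ rm)
    (hw : ∃ i : Fin m, (g i).isSome)
    (u q : Fin (m + 2) → ℤ)
    (hu : u = Fin.snoc (fun i => ru * transIndex m p i) k)
    (hq : q = Fin.snoc (fun i => rm * transQuery m g i) 1)
    (U Q Ix Iy M₁ M₂ : Matrix (Fin (m + 2)) (Fin (m + 2)) ℤ)
    [Invertible M₁] [Invertible M₂]
    (hU : ∀ i j, i < j → U i j = 0) (hUdiag : ∀ i, U i i = u i)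
    (hQ : ∀ i j, i < j → Q i j = 0) (hQdiag : ∀ i, Q i i = q i)
    (hIx : ∀ i j, i < j → Ix i j = 0) (hIxdiag : ∀ i, Ix i i = 1)
    (hIy : ∀ i j, i < j → Iy i j = 0) (hIydiag : ∀ i, Iy i i = 1) :
    ((∀ i : Fin m, ∀ b : Bool, g i = some b → p i = b) →
      ((M₁ * Ix * U * Ix * M₂) * (⅟M₂ * Iy * Q * Iy * ⅟M₁)).trace = k) ∧
    (¬ (∀ i : Fin m, ∀ b : Bool, g i = some b → p i = b) →
      ((M₁ * Ix * U * Ix * M₂) * (⅟M₂ * Iy * Q * Iy * ⅟M₁)).trace < 0) := by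
  -- Step 1: reduce the trace to trace ((Ix*U*Ix) * (Iy*Q*Iy))
  have hconj : ((M₁ * Ix * U * Ix * M₂) * (⅟M₂ * Iy * Q * Iy * ⅟M₁)).trace
      = ((Ix * U * Ix) * (Iy * Q * Iy)).trace := by
    have h1 : (M₁ * Ix * U * Ix * M₂) * (⅟M₂ * Iy * Q * Iy * ⅟M₁)
        = M₁ * ((Ix * U * Ix) * (Iy * Q * Iy) * ⅟M₁) := by
      simp only [mul_assoc]
      rw [← mul_assoc M₂ ⅟M₂, mul_invOf_self, one_mul]
    rw [h1, Matrix.trace_mul_comm]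
    simp only [mul_assoc]
    rw [invOf_mul_self, mul_one]
  rw [hconj]
  -- Step 2: trace = ∑ u i * q i
  have hX : LowTri (Ix * U * Ix) := (LowTri.mul hIx hU).mul hIx
  have hY : LowTri (Iy * Q * Iy) := (LowTri.mul hIy hQ).mul hIy
  have hXd : ∀ i, (Ix * U * Ix) i i = u i := by
    intro i
    rw [(LowTri.mul hIx hU).diag_mul hIx, LowTri.diag_mul hIx hU, hIxdiag, hUdiag,
      one_mul, mul_one]
  have hYd : ∀ i, (Iy * Q * Iy) i i = q i := by
    intro i
    rw [(LowTri.mul hIy hQ).diag_mul hIy, LowTri.diag_mul hIy hQ, hIydiag, hQdiag,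
      one_mul, mul_one]
  have htr : ((Ix * U * Ix) * (Iy * Q * Iy)).trace = ∑ i, u i * q i := by
    rw [trace_tri_mul hX hY]
    exact Finset.sum_congr rfl fun i _ => by rw [hXd, hYd]
  rw [htr]
  -- Step 3: arithmetic
  set c : ℤ := ((Finset.univ.filter (fun i : Fin m => (g i).isSome)).card : ℤ) with hc
  set s : ℤ := ∑ i : Fin m, encP (p i) * encQ (g i) with hs
  have hsum : ∑ i, u i * q i = ru * rm * (s - c) + k := by
    rw [hu, hq, Fin.sum_univ_castSucc]
    simp only [Fin.snoc_castSucc, Fin.snoc_last]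
    rw [Fin.sum_univ_castSucc]
    simp only [transIndex, transQuery, Fin.snoc_castSucc, Fin.snoc_last]
    have hsr : (∑ x : Fin m, ru * encP (p x) * (rm * encQ (g x))) = ru * rm * s := by
      rw [hs, Finset.mul_sum]
      exact Finset.sum_congr rfl fun i _ => by ring
    rw [hsr, hc]
    ring
  rw [hsum]
  -- indicator facts
  have hcsum : c = ∑ i : Fin m, (if (g i).isSome then (1 : ℤ) else 0) := by
    rw [hc]
    rw [Finset.sum_boole]
  have hterm_le : ∀ i : Fin m, encP (p i) * encQ (g i) ≤ (if (g i).isSome then (1:ℤ) else 0) := by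
    intro i
    cases hgi : g i with
    | none => simp [encQ, hgi]
    | some b => cases b <;> cases hpi : p i <;> simp [encP, encQ, hgi, hpi]
  constructor
  · intro hmatch
    have hs_eq : s = c := by
      rw [hs, hcsum]
      apply Finset.sum_congr rfl
      intro i _
      cases hgi : g i with
      | none => simp [encQ, hgi]
      | some b =>
        have hpb := hmatch i b hgi
        rw [hpb]
        cases b <;> simp [encP, encQ]
    rw [hs_eq]
    ring
  · intro hmis
    push_neg at hmis
    obtain ⟨i₀, b₀, hgi₀, hpi₀⟩ := hmis
    have hpb : p i₀ = !b₀ := by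
      revert hpi₀; cases b₀ <;> cases hpp : p i₀ <;> simp
    have hterm₀ : encP (p i₀) * encQ (g i₀) = -1 := by
      rw [hgi₀, hpb]; cases b₀ <;> simp [encP, encQ]
    have hsle : s ≤ c - 2 := by
      have h1 : s = encP (p i₀) * encQ (g i₀)
          + ∑ i ∈ Finset.univ.erase i₀, encP (p i) * encQ (g i) :=
        (Finset.add_sum_erase _ _ (Finset.mem_univ i₀)).symm
      have h2 : ∑ i ∈ Finset.univ.erase i₀, encP (p i) * encQ (g i)
          ≤ ∑ i ∈ Finset.univ.erase i₀, (if (g i).isSome then (1:ℤ) else 0) :=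
        Finset.sum_le_sum fun i _ => hterm_le i
      have h3 : c = (if (g i₀).isSome then (1:ℤ) else 0)
          + ∑ i ∈ Finset.univ.erase i₀, (if (g i).isSome then (1:ℤ) else 0) := by
        rw [hcsum]; exact (Finset.add_sum_erase _ _ (Finset.mem_univ i₀)).symm
      rw [hgi₀] at h3
      simp only [Option.isSome_some, if_true] at h3
      rw [h1, hterm₀]
      linarith
    nlinarith [mul_pos (lt_trans hk hru) (lt_of_lt_of_le one_pos hrm),
      mul_le_mul_of_nonneg_left hsle (le_of_lt (mul_pos (lt_trans hk hru) (lt_of_lt_of_le one_pos hrm))),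
      mul_le_mul_of_nonneg_right (le_of_lt hru) (le_trans zero_le_one hrm)]
end

section
/- Keyword separation in BWMA: let h, h' ∈ {0,1}^ι be distinct boolean vectors and let t ∈ {0,1}^κ, g ∈ {0,1,*}^κ be arbitrary. Form the concatenated index vector P = h ∥ t ∈ {0,1}^{ι+κ} and query vector Q = h' ∥ g ∈ {0,1,*}^{ι+κ} (the keyword part of the query has no wildcards). Then under the BWMA encodings, the inner product P_t · Q_t ≤ -2; in particular it is nonzero, so a token for keyword hash h' never matches an index built for keyword hash h ≠ h'. -/
theorem bwma_keyword_separation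
    (ι κ : ℕ) (h h' : Fin ι → Bool) (hne : h ≠ h')
    (t : Fin κ → Bool) (g : Fin κ → Option Bool) :
    ∑ i : Fin (ι + κ + 1),
        transIndex (ι + κ) (Fin.append h t) i *
        transQuery (ι + κ) (Fin.append (fun i => some (h' i)) g) i ≤ -2 := by
  obtain ⟨j, hj⟩ := Function.ne_iff.mp hne
  set m := ι + κ with hm
  set P : Fin m → Bool := Fin.append h t with hP
  set Q : Fin m → Option Bool := Fin.append (fun i => some (h' i)) g with hQ
  have sum1 : ∑ i : Fin (m + 1), transIndex m P i * transQuery m Q i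
      = ∑ i : Fin m, (encP (P i) * encQ (Q i)
          - (if (Q i).isSome then (1 : ℤ) else 0)) := by
    have hcard : ((Finset.univ.filter (fun i : Fin m => (Q i).isSome)).card : ℤ)
        = ∑ i : Fin m, (if (Q i).isSome then (1 : ℤ) else 0) := by
      simp [Finset.sum_boole]
    rw [Fin.sum_univ_castSucc]
    simp only [transIndex, transQuery, Fin.snoc_castSucc, Fin.snoc_last, one_mul,
      mul_neg]
    rw [hcard, Finset.sum_sub_distrib]
    ring
  rw [sum1]
  set d : Fin m → ℤ := fun i => encP (P i) * encQ (Q i)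
      - (if (Q i).isSome then (1 : ℤ) else 0) with hd
  have hnonpos : ∀ i, d i ≤ 0 := by
    intro i
    simp only [hd]
    cases hq : Q i with
    | none => simp [encQ]
    | some b => cases b <;> cases hp : P i <;> simp [encQ, encP]
  set jc : Fin m := Fin.castAdd κ j with hjc
  have hPj : P jc = h j := Fin.append_left h t j
  have hQj : Q jc = some (h' j) := Fin.append_left (fun i => some (h' i)) g j
  have hdj : d jc = -2 := by
    simp only [hd, hPj, hQj]
    cases hb : h j <;> cases hb' : h' j <;> simp_all [encP, encQ]
  calc ∑ i : Fin m, d i = d jc + ∑ i ∈ Finset.univ.erase jc, d i := by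
        rw [Finset.add_sum_erase _ _ (Finset.mem_univ jc)]
    _ ≤ -2 + 0 := by
        refine add_le_add (le_of_eq hdj) (Finset.sum_nonpos fun i _ => hnonpos i)
    _ = -2 := by ring
end
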